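/- arXiv:0806.3295 — 3 statements merged into one kernel-verified Lean document; each statement's English description precedes it below -/
import Mathlib

section
/- Let Ψ(x) = ∑_{n≤x} Λ(n) be the Chebyshev function and suppose f is an increasing positive function with Ψ(x) = x + O(f(x)). Then ∑_{n≤x} G(n) = x²/2 + O(x·f(x)), where G(n) = ∑_{k₁+k₂=n} Λ(k₁)Λ(k₂). -/
open ArithmeticFunction MeasureTheory Finset Real


noncomputable def G (n : ℕ) : ℝ := ∑ p ∈ Finset.HasAntidiagonal.antidiagonal n, Λ p.1 * Λ p.2

noncomputable def Psi (x : ℝ) : ℝ := ∑ n ∈ Finset.Icc 1 ⌊x⌋₊, Λ n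

noncomputable def e (α : ℝ) : ℂ := Complex.exp (2 * Real.pi * Complex.I * α)

noncomputable def Texp (x : ℝ) (α : ℝ) : ℂ := ∑ n ∈ Finset.Icc 1 ⌊x⌋₊, e (α * n)

noncomputable def Sexp (x : ℝ) (α : ℝ) : ℂ := ∑ n ∈ Finset.Icc 1 ⌊x⌋₊, (Λ n : ℂ) * e (α * n)

noncomputable def Rexp (x : ℝ) (α : ℝ) : ℂ := Sexp x α - Texp x α

/-!
Writing `ψ(m) = m + R(m)`, the convolution identity `∑_{n ≤ N} G(n) = ∑_{a ≤ N} Λ(a) ψ(N - a)`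
and partial summation `∑_{a ≤ N} Λ(a) (N - a) = ∑_{m < N} ψ(m)` give
`∑_{n ≤ N} G(n) = N(N-1)/2 + ∑_{m < N} R(m) + ∑_{a ≤ N} Λ(a) R(N - a)`.
Both error sums are `O((N + ψ(N)) · max_{m ≤ N} |R(m)|)`, which is `O(x f(x))` by Chebyshev's
bound `ψ(N) = O(N)` and the monotonicity of `f`.
-/

lemma Psi_natCast (m : ℕ) : Psi m = ∑ n ∈ Icc 1 m, Λ n := by
  rw [Psi, Nat.floor_natCast]

lemma Psi_natCast_add_one (m : ℕ) : Psi (m + 1 : ℕ) = Psi m + Λ (m + 1) := by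
  rw [Psi_natCast, Psi_natCast, sum_Icc_succ_top (by omega)]

lemma Psi_le_const_mul_self {x : ℝ} (hx : 0 ≤ x) : Psi x ≤ (Real.log 4 + 4) * x := by
  have h : Psi x = Chebyshev.psi x := by
    rw [Psi, Chebyshev.psi, ← Icc_add_one_left_eq_Ioc, zero_add]
  exact h ▸ Chebyshev.psi_le_const_mul_self hx

lemma G_add_one (N : ℕ) : G (N + 1) = ∑ a ∈ Icc 1 N, Λ a * Λ (N + 1 - a) := by
  rw [G, Nat.sum_antidiagonal_eq_sum_range_succ_mk]
  refine (sum_subset (fun a ha => ?_) (fun a ha hna => ?_)).symm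
  · simp only [mem_Icc] at ha
    simp only [mem_range]
    omega
  · simp only [mem_range] at ha
    simp only [mem_Icc, not_and, not_le] at hna
    obtain rfl | rfl : a = 0 ∨ a = N + 1 := by omega
    all_goals simp

lemma sum_G_eq_sum_vonMangoldt_mul_Psi (N : ℕ) :
    ∑ n ∈ Icc 1 N, G n = ∑ a ∈ Icc 1 N, Λ a * Psi (N - a : ℕ) := by
  induction N with
  | zero => simp
  | succ N ih =>
    have hstep : ∀ a ∈ Icc 1 N,
        Λ a * Psi (N + 1 - a : ℕ) = Λ a * Psi (N - a : ℕ) + Λ a * Λ (N + 1 - a) := by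
      intro a ha
      rw [show N + 1 - a = N - a + 1 by grind, Psi_natCast_add_one, mul_add]
    rw [sum_Icc_succ_top (by omega), ih, G_add_one, sum_Icc_succ_top (by omega),
      sum_congr rfl hstep, sum_add_distrib, Nat.sub_self, Psi_natCast]
    simp

lemma sum_vonMangoldt_mul_sub_eq_sum_Psi (N : ℕ) :
    ∑ a ∈ Icc 1 N, Λ a * ((N : ℝ) - a) = ∑ m ∈ range N, Psi m := by
  induction N with
  | zero => simp
  | succ N ih =>
    have hstep : ∀ a ∈ Icc 1 N, Λ a * ((N + 1 : ℕ) - (a : ℝ)) = Λ a * ((N : ℝ) - a) + Λ a := by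
      intro a _
      push_cast
      ring
    rw [sum_range_succ, ← ih, sum_Icc_succ_top (by omega), sum_congr rfl hstep, sum_add_distrib,
      Psi_natCast]
    simp

lemma sum_range_natCast (N : ℕ) : ∑ m ∈ range N, (m : ℝ) = N * (N - 1) / 2 := by
  induction N with
  | zero => simp
  | succ N ih =>
    rw [sum_range_succ, ih]
    push_cast
    ring

lemma abs_sum_G_sub_le {N : ℕ} {B : ℝ} (hB : ∀ m ≤ N, |Psi m - m| ≤ B) :
    |∑ n ∈ Icc 1 N, G n - N * (N - 1) / 2| ≤ (Real.log 4 + 5) * N * B := by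
  have hB0 : 0 ≤ B := (abs_nonneg _).trans (hB 0 (Nat.zero_le N))
  have hsplit : ∑ n ∈ Icc 1 N, G n - N * (N - 1) / 2 =
      ∑ a ∈ Icc 1 N, Λ a * (Psi (N - a : ℕ) - ((N : ℝ) - a)) + ∑ m ∈ range N, (Psi m - m) := by
    rw [sum_sub_distrib, ← sum_vonMangoldt_mul_sub_eq_sum_Psi, sum_range_natCast,
      sum_G_eq_sum_vonMangoldt_mul_Psi]
    simp only [mul_sub, sum_sub_distrib]
    ring
  have hconv : |∑ a ∈ Icc 1 N, Λ a * (Psi (N - a : ℕ) - ((N : ℝ) - a))| ≤ (Real.log 4 + 4) * N * B :=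
    calc _ ≤ ∑ a ∈ Icc 1 N, Λ a * B := by
          refine (abs_sum_le_sum_abs _ _).trans (sum_le_sum fun a ha => ?_)
          rw [abs_mul, abs_of_nonneg vonMangoldt_nonneg, ← Nat.cast_sub (mem_Icc.mp ha).2]
          exact mul_le_mul_of_nonneg_left (hB _ (Nat.sub_le N a)) vonMangoldt_nonneg
      _ = Psi N * B := by rw [← sum_mul, Psi_natCast]
      _ ≤ (Real.log 4 + 4) * N * B :=
          mul_le_mul_of_nonneg_right (Psi_le_const_mul_self (Nat.cast_nonneg N)) hB0
  have hrem : |∑ m ∈ range N, (Psi m - m)| ≤ N * B :=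
    calc _ ≤ ∑ _m ∈ range N, B :=
          (abs_sum_le_sum_abs _ _).trans (sum_le_sum fun m hm => hB m (mem_range.mp hm).le)
      _ = N * B := by rw [sum_const, card_range, nsmul_eq_mul]
  rw [hsplit]
  linarith [abs_add_le (∑ a ∈ Icc 1 N, Λ a * (Psi (N - a : ℕ) - ((N : ℝ) - a)))
    (∑ m ∈ range N, (Psi m - m))]

lemma abs_floor_mul_floor_sub_one_sub_sq_le {x : ℝ} (hx : 0 ≤ x) :
    |(⌊x⌋₊ : ℝ) * (⌊x⌋₊ - 1) / 2 - x ^ 2 / 2| ≤ 2 * x := by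
  have hle : (⌊x⌋₊ : ℝ) ≤ x := Nat.floor_le hx
  have hlt : x < ⌊x⌋₊ + 1 := Nat.lt_floor_add_one x
  rw [abs_le]
  constructor <;> nlinarith [Nat.cast_nonneg (α := ℝ) ⌊x⌋₊]

/-- The hypothesis `|ψ(x) - x| ≤ C f(x)` only covers `x ≥ 2`; `f(x) / f(2) ≥ 1` absorbs `m = 0, 1`. -/
lemma exists_abs_Psi_natCast_sub_le {f : ℝ → ℝ} (hf : Monotone f) (hfpos : ∀ x ≥ 2, 0 < f x)
    (hpsi : ∃ C : ℝ, ∀ x ≥ 2, |Psi x - x| ≤ C * f x) :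
    ∃ D : ℝ, ∀ x ≥ 2, ∀ m : ℕ, (m : ℝ) ≤ x → |Psi m - m| ≤ D * f x := by
  obtain ⟨C, hC⟩ := hpsi
  have hf2 : 0 < f 2 := hfpos 2 le_rfl
  refine ⟨max C 0 + 1 / f 2, fun x hx m hmx => ?_⟩
  have hfx : 0 < f x := hfpos x hx
  have hone : 1 ≤ 1 / f 2 * f x := by
    rw [one_div_mul_eq_div, one_le_div hf2]
    exact hf hx
  have hCx : 0 ≤ max C 0 * f x := mul_nonneg (le_max_right C 0) hfx.le
  rw [add_mul]
  rcases lt_or_ge m 2 with hm | hm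
  · have hPsi : Psi m = 0 := by
      interval_cases m <;> simp [Psi]
    have : (m : ℝ) ≤ 1 := by exact_mod_cast Nat.lt_succ_iff.mp hm
    rw [hPsi, zero_sub, abs_neg, Nat.abs_cast]
    linarith
  · have hm2 : (2 : ℝ) ≤ m := by exact_mod_cast hm
    calc |Psi m - m| ≤ C * f m := hC m hm2
      _ ≤ max C 0 * f m := mul_le_mul_of_nonneg_right (le_max_left C 0) (hfpos m hm2).le
      _ ≤ max C 0 * f x := mul_le_mul_of_nonneg_left (hf hmx) (le_max_right C 0)
      _ ≤ max C 0 * f x + 1 / f 2 * f x := by linarith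

theorem stmt1 (f : ℝ → ℝ) (hf : StrictMono f) (hfpos : ∀ x ≥ 2, 0 < f x)
    (hpsi : ∃ C : ℝ, ∀ x ≥ 2, |Psi x - x| ≤ C * f x) :
    ∃ C : ℝ, ∀ x ≥ 2, |(∑ n ∈ Finset.Icc 1 ⌊x⌋₊, G n) - x ^ 2 / 2| ≤ C * x * f x := by
  obtain ⟨D, hD⟩ := exists_abs_Psi_natCast_sub_le hf.monotone hfpos hpsi
  have hf2 : 0 < f 2 := hfpos 2 le_rfl
  refine ⟨(Real.log 4 + 5) * D + 2 / f 2, fun x hx => ?_⟩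
  have hx0 : 0 ≤ x := by linarith
  have hN : (⌊x⌋₊ : ℝ) ≤ x := Nat.floor_le hx0
  have hB := fun m (hm : m ≤ ⌊x⌋₊) => hD x hx m (le_trans (Nat.cast_le.mpr hm) hN)
  have hDf : 0 ≤ D * f x := (abs_nonneg _).trans (hB 0 (Nat.zero_le _))
  have hlin : 2 * x ≤ 2 / f 2 * x * f x := by
    rw [div_mul_eq_mul_div, div_mul_eq_mul_div, le_div_iff₀ hf2]
    nlinarith [hf.monotone hx]
  calc _ ≤ |∑ n ∈ Icc 1 ⌊x⌋₊, G n - ⌊x⌋₊ * (⌊x⌋₊ - 1) / 2|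
        + |(⌊x⌋₊ : ℝ) * (⌊x⌋₊ - 1) / 2 - x ^ 2 / 2| := abs_sub_le _ _ _
    _ ≤ (Real.log 4 + 5) * ⌊x⌋₊ * (D * f x) + 2 * x :=
        add_le_add (abs_sum_G_sub_le hB) (abs_floor_mul_floor_sub_one_sub_sq_le hx0)
    _ ≤ (Real.log 4 + 5) * x * (D * f x) + 2 / f 2 * x * f x := add_le_add (by gcongr) hlin
    _ = ((Real.log 4 + 5) * D + 2 / f 2) * x * f x := by ring
end

section
/- Let c₁,…,c_N be complex numbers and S(t) = ∑_{n=1}^N c_n e(tn) with e(α)=e^{2πiα}. Then for y > 0, ∫_{-1/y}^{1/y} |S(t)|² dt ≪ y^{-2} ∫_{-∞}^{∞} |A(x)|² dx, where A(x) = ∑_{n ≤ N, |n−x| ≤ y/4} c_n. (Gallagher's lemma.) -/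
open ArithmeticFunction MeasureTheory Finset Real


/-!
The tent `τ(u) = max (y/2 - |u|) 0` is the autocorrelation of the indicator of `[-y/4, y/4]`,
so its Fourier transform is the square `K(t) = (sin (π y t / 2) / (π t))²` of that of the
indicator. By Fourier inversion `τ(u) = ∫ K(t) e(t u) dt`; expanding `|S(t)|²` therefore gives
`∫ K |S|² = ∑_{n,m} c_n c̄_m τ(n - m)`. Expanding `|A(x)|²` gives the same double sum, since
`τ(n - m)` is the length of the overlap of the intervals of radius `y/4` around `n` and `m`.
Finally `K ≥ (y/π)²` on `|t| ≤ 1/y` by Jordan's inequality, whence the bound with `C = π²`.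
Below, `r = y/4` is the radius of the intervals, `τ = tent r` and `K = fejer r`.
-/

open FourierTransform Convolution ContinuousLinearMap ComplexConjugate

noncomputable def tent (r u : ℝ) : ℝ := max (2 * r - |u|) 0

noncomputable def fejer (r t : ℝ) : ℝ := (2 * r * sinc (2 * π * r * t)) ^ 2

lemma volume_real_Icc_inter_Icc (a b r : ℝ) :
    volume.real (Set.Icc (a - r) (a + r) ∩ Set.Icc (b - r) (b + r)) = tent r (a - b) := by
  rw [Set.Icc_inter_Icc, Real.volume_real_Icc, tent]
  congr 1
  rcases le_total a b with h | h
  · rw [abs_of_nonpos (by linarith), min_eq_left (by linarith), max_eq_right (by linarith)]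
    ring
  · rw [abs_of_nonneg (by linarith), min_eq_right (by linarith), max_eq_left (by linarith)]
    ring

lemma convolution_indicator_Icc_self (r u : ℝ) :
    ((Set.Icc (-r) r).indicator (1 : ℝ → ℂ) ⋆[mul ℂ ℂ] (Set.Icc (-r) r).indicator 1) u
      = tent r u := by
  have hmem : ∀ x, u - x ∈ Set.Icc (-r) r ↔ x ∈ Set.Icc (u - r) (u + r) := fun x =>
    abs_le.symm.trans Set.mem_Icc_iff_abs_le
  have hprod : ∀ x, (Set.Icc (-r) r).indicator (1 : ℝ → ℂ) x * (Set.Icc (-r) r).indicator 1 (u - x)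
      = (Set.Icc (0 - r) (0 + r) ∩ Set.Icc (u - r) (u + r)).indicator 1 x := fun x => by
    simp only [zero_sub, zero_add, Set.indicator_apply, Set.mem_inter_iff, hmem, Pi.one_apply]
    split_ifs <;> simp_all
  simp only [convolution_def, mul_apply', hprod]
  rw [Pi.one_def, integral_indicator_const _ (measurableSet_Icc.inter measurableSet_Icc),
    volume_real_Icc_inter_Icc, zero_sub, tent, tent, abs_neg, Complex.real_smul, mul_one]

lemma integrable_indicator_Icc (r : ℝ) : Integrable ((Set.Icc (-r) r).indicator (1 : ℝ → ℂ)) :=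
  continuous_const.integrableOn_Icc.integrable_indicator measurableSet_Icc

lemma fourier_indicator_Icc {r : ℝ} (hr : 0 ≤ r) (t : ℝ) :
    𝓕 ((Set.Icc (-r) r).indicator (1 : ℝ → ℂ)) t = 2 * r * sinc (2 * π * r * t) := by
  have hind : (fun v : ℝ =>
        Complex.exp (↑(-2 * π * v * t) * Complex.I) • (Set.Icc (-r) r).indicator (1 : ℝ → ℂ) v)
      = (Set.Icc (-r) r).indicator (fun v => Complex.exp (↑(-2 * π * t * v) * Complex.I)) := by
    ext v
    simp [Set.indicator_apply, mul_right_comm _ (v : ℂ)]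
  rw [Real.fourier_real_eq_integral_exp_smul, hind, integral_indicator measurableSet_Icc,
    integral_Icc_eq_integral_Ioc, ← intervalIntegral.integral_of_le (by linarith)]
  rcases eq_or_ne t 0 with rfl | ht
  · simp only [neg_mul, mul_zero, zero_mul, Complex.ofReal_zero, Complex.exp_zero,
      intervalIntegral.integral_const, sub_neg_eq_add, Complex.real_smul, Complex.ofReal_add,
      mul_one, sinc_zero, Complex.ofReal_one]
    ring
  have hc : -2 * π * t ≠ 0 := by simp [ht, pi_ne_zero]
  have htc : (t : ℂ) ≠ 0 := Complex.ofReal_ne_zero.mpr ht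
  rw [intervalIntegral.integral_comp_mul_left (fun x : ℝ => Complex.exp (x * Complex.I)) hc,
    mul_neg, integral_exp_mul_I_eq_sinc, ← sinc_neg, Complex.real_smul]
  push_cast
  field_simp

lemma continuous_tent (r : ℝ) : Continuous (tent r) := by
  unfold tent
  fun_prop

lemma integrable_tent (r : ℝ) : Integrable (fun u => (tent r u : ℂ)) := by
  refine (Complex.continuous_ofReal.comp (continuous_tent r)).integrable_of_hasCompactSupport
    (HasCompactSupport.intro (isCompact_Icc (a := -(2 * r)) (b := 2 * r)) fun u hu => ?_)
  have : 2 * r ≤ |u| := by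
    by_contra! h
    exact hu ⟨by linarith [neg_abs_le u], by linarith [le_abs_self u]⟩
  simp [tent, this]

lemma fourier_tent {r : ℝ} (hr : 0 ≤ r) (t : ℝ) :
    𝓕 (fun u => (tent r u : ℂ)) t = fejer r t := by
  rw [← funext (convolution_indicator_Icc_self r), Real.fourier_mul_convolution_eq
    (integrable_indicator_Icc r) (integrable_indicator_Icc r), fourier_indicator_Icc hr, fejer]
  push_cast
  ring

lemma mul_sinc (x : ℝ) : x * sinc x = Real.sin x := by
  rcases eq_or_ne x 0 with rfl | hx
  · simp
  · rw [sinc_of_ne_zero hx, mul_div_cancel₀ _ hx]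

lemma fejer_nonneg (r t : ℝ) : 0 ≤ fejer r t := sq_nonneg _

lemma fejer_le (r t : ℝ) : fejer r t ≤ ((2 * r) ^ 2 + (π ^ 2)⁻¹) * (1 + t ^ 2)⁻¹ := by
  have hle : fejer r t ≤ (2 * r) ^ 2 := by
    rw [fejer, mul_pow]
    exact mul_le_of_le_one_right (sq_nonneg _)
      ((sq_le_one_iff_abs_le_one _).2 (abs_sinc_le_one _))
  have hdecay : t ^ 2 * fejer r t ≤ (π ^ 2)⁻¹ := by
    have h : t ^ 2 * fejer r t = (2 * π * r * t * sinc (2 * π * r * t)) ^ 2 / π ^ 2 := by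
      rw [fejer]
      field_simp
    rw [h, mul_sinc, div_eq_mul_inv]
    exact mul_le_of_le_one_left (by positivity) (sin_sq_le_one _)
  rw [le_mul_inv_iff₀ (by positivity)]
  linarith

lemma continuous_fejer (r : ℝ) : Continuous (fejer r) := by
  unfold fejer
  fun_prop

lemma integrable_fejer (r : ℝ) : Integrable (fejer r) := by
  refine (integrable_inv_one_add_sq.const_mul ((2 * r) ^ 2 + (π ^ 2)⁻¹)).mono'
    (continuous_fejer r).aestronglyMeasurable (ae_of_all _ fun t => ?_)
  rw [Real.norm_of_nonneg (fejer_nonneg r t)]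
  exact fejer_le r t

lemma fourierInv_fejer {r : ℝ} (hr : 0 ≤ r) (u : ℝ) :
    𝓕⁻ (fun t => (fejer r t : ℂ)) u = tent r u := by
  rw [← funext (fourier_tent hr)]
  refine (integrable_tent r).fourierInv_fourier_eq ?_
    (Complex.continuous_ofReal.comp (continuous_tent r)).continuousAt
  rw [funext (fourier_tent hr)]
  exact (integrable_fejer r).ofReal

lemma two_div_pi_le_abs_sinc {x : ℝ} (hx : |x| ≤ π / 2) : 2 / π ≤ |sinc x| := by
  rcases eq_or_ne x 0 with rfl | hx0
  · rw [sinc_zero, abs_one, div_le_one pi_pos]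
    linarith [pi_gt_three]
  · rw [sinc_of_ne_zero hx0, abs_div, le_div_iff₀ (abs_pos.mpr hx0)]
    exact mul_abs_le_abs_sin hx

lemma sq_div_pi_le_fejer {r t : ℝ} (hr : 0 ≤ r) (hrt : 4 * r * |t| ≤ 1) :
    (4 * r / π) ^ 2 ≤ fejer r t := by
  have hx : |2 * π * r * t| ≤ π / 2 := by
    rw [abs_mul, abs_of_nonneg (by positivity)]
    nlinarith [pi_pos]
  have hsinc := two_div_pi_le_abs_sinc hx
  rw [fejer, mul_pow, ← sq_abs (sinc _), show 4 * r / π = 2 * r * (2 / π) by ring, mul_pow]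
  gcongr

lemma intervalIntegral_le_mul_integral_fejer_mul {r T C : ℝ} (hr : 0 < r) (hT : 0 ≤ T)
    (hrT : 4 * r * T ≤ 1) {g : ℝ → ℝ} (hg : Continuous g) (hg0 : ∀ t, 0 ≤ g t)
    (hgC : ∀ t, g t ≤ C) :
    ∫ t in -T..T, g t ≤ (π / (4 * r)) ^ 2 * ∫ t, fejer r t * g t := by
  have hint : Integrable (fun t => fejer r t * g t) :=
    (integrable_fejer r).mul_bdd hg.aestronglyMeasurable
      (ae_of_all _ fun t => by rw [Real.norm_of_nonneg (hg0 t)]; exact hgC t)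
  have hpoint : ∀ t ∈ Set.Icc (-T) T, g t ≤ (π / (4 * r)) ^ 2 * (fejer r t * g t) :=
    fun t ht => by
      have hfejer := sq_div_pi_le_fejer (t := t) hr.le (by nlinarith [abs_le.mpr ⟨ht.1, ht.2⟩])
      have hone : 1 ≤ (π / (4 * r)) ^ 2 * fejer r t :=
        calc (1 : ℝ) = (π / (4 * r)) ^ 2 * (4 * r / π) ^ 2 := by field_simp
          _ ≤ _ := by gcongr
      nlinarith [hg0 t]
  calc ∫ t in -T..T, g t ≤ ∫ t in -T..T, (π / (4 * r)) ^ 2 * (fejer r t * g t) :=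
        intervalIntegral.integral_mono_on (by linarith) (hg.intervalIntegrable _ _)
          (hint.const_mul _).intervalIntegrable hpoint
    _ = (π / (4 * r)) ^ 2 * ∫ t in -T..T, fejer r t * g t :=
        intervalIntegral.integral_const_mul _ _
    _ ≤ (π / (4 * r)) ^ 2 * ∫ t, fejer r t * g t := by
        rw [intervalIntegral.integral_of_le (by linarith)]
        exact mul_le_mul_of_nonneg_left (setIntegral_le_integral hint
          (ae_of_all _ fun t => mul_nonneg (fejer_nonneg r t) (hg0 t))) (by positivity)

lemma norm_e (x : ℝ) : ‖e x‖ = 1 := by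
  rw [e, Complex.norm_exp]
  simp

@[fun_prop]
lemma continuous_e : Continuous e := by
  unfold e
  fun_prop

lemma e_mul_conj_e (x y : ℝ) : e x * conj (e y) = e (x - y) := by
  simp only [e, ← Complex.exp_conj, ← Complex.exp_add, map_mul, Complex.conj_ofReal,
    Complex.conj_I, map_ofNat]
  push_cast
  ring_nf

lemma fourierInv_eq_integral_mul_e (f : ℝ → ℂ) (u : ℝ) : 𝓕⁻ f u = ∫ t, f t * e (t * u) := by
  rw [Real.fourierInv_eq']
  congr 1 with t
  rw [smul_eq_mul, mul_comm, e]
  simp only [RCLike.inner_apply, conj_trivial]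
  push_cast
  ring_nf

lemma integral_mul_norm_sq_sum_e {ι : Type*} (s : Finset ι) (c : ι → ℂ) (a : ι → ℝ)
    {w : ℝ → ℝ} (hw : Integrable w) :
    ((∫ t, w t * ‖∑ n ∈ s, c n * e (t * a n)‖ ^ 2 : ℝ) : ℂ)
      = ∑ n ∈ s, ∑ m ∈ s, c n * conj (c m) * 𝓕⁻ (fun t => (w t : ℂ)) (a n - a m) := by
  have hexpand : ∀ t, ((w t * ‖∑ n ∈ s, c n * e (t * a n)‖ ^ 2 : ℝ) : ℂ)
      = ∑ n ∈ s, ∑ m ∈ s, c n * conj (c m) * (w t * e (t * (a n - a m))) := fun t => by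
    push_cast
    rw [← Complex.mul_conj', map_sum, Finset.sum_mul_sum, Finset.mul_sum]
    refine Finset.sum_congr rfl fun n _ => ?_
    rw [Finset.mul_sum]
    refine Finset.sum_congr rfl fun m _ => ?_
    rw [mul_sub, ← e_mul_conj_e, map_mul]
    ring
  have hint : ∀ u, Integrable (fun t => (w t : ℂ) * e (t * u)) := fun u =>
    hw.ofReal.mul_bdd (continuous_e.comp (continuous_mul_const u)).aestronglyMeasurable
      (ae_of_all _ fun t => (norm_e _).le)
  rw [← integral_complex_ofReal, integral_congr_ae (ae_of_all _ hexpand),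
    integral_finsetSum _ fun n _ => integrable_finsetSum _ fun m _ => (hint _).const_mul _]
  refine Finset.sum_congr rfl fun n _ => ?_
  rw [integral_finsetSum _ fun m _ => (hint _).const_mul _]
  simp_rw [integral_const_mul, fourierInv_eq_integral_mul_e]

lemma integral_norm_sq_sum_indicator {α ι : Type*} [MeasurableSpace α] (μ : Measure α)
    (s : Finset ι) (E : ι → Set α) (hE : ∀ n, MeasurableSet (E n)) (hμE : ∀ n, μ (E n) ≠ ⊤)
    (c : ι → ℂ) :
    ((∫ x, ‖∑ n ∈ s, (E n).indicator (fun _ => c n) x‖ ^ 2 ∂μ : ℝ) : ℂ)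
      = ∑ n ∈ s, ∑ m ∈ s, c n * conj (c m) * μ.real (E n ∩ E m) := by
  have hexpand : ∀ x, ((‖∑ n ∈ s, (E n).indicator (fun _ => c n) x‖ ^ 2 : ℝ) : ℂ)
      = ∑ n ∈ s, ∑ m ∈ s, (E n ∩ E m).indicator (fun _ => c n * conj (c m)) x := fun x => by
    push_cast
    rw [← Complex.mul_conj', map_sum, Finset.sum_mul_sum]
    refine Finset.sum_congr rfl fun n _ => Finset.sum_congr rfl fun m _ => ?_
    rw [Set.inter_indicator_mul]
    by_cases hx : x ∈ E m <;> simp [hx]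
  have hint : ∀ n m, Integrable ((E n ∩ E m).indicator (fun _ => c n * conj (c m))) μ :=
    fun n m => (integrableOn_const (measure_ne_top_of_subset Set.inter_subset_left (hμE n)))
      |>.integrable_indicator ((hE n).inter (hE m))
  rw [← integral_complex_ofReal, integral_congr_ae (ae_of_all _ hexpand),
    integral_finsetSum _ fun n _ => integrable_finsetSum _ fun m _ => hint n m]
  refine Finset.sum_congr rfl fun n _ => ?_
  rw [integral_finsetSum _ fun m _ => hint n m]
  refine Finset.sum_congr rfl fun m _ => ?_
  rw [integral_indicator_const _ ((hE n).inter (hE m)), Complex.real_smul, mul_comm]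

theorem stmt3 :
    ∃ C : ℝ, 0 < C ∧ ∀ (N : ℕ) (c : ℕ → ℂ) (y : ℝ), 0 < y →
      (∫ t in (-(1/y))..(1/y), ‖∑ n ∈ Finset.Icc 1 N, c n * e (t * n)‖ ^ 2) ≤
        C * y ^ (-2 : ℤ) *
          ∫ x : ℝ, ‖∑ n ∈ (Finset.Icc 1 N).filter (fun n : ℕ => |(n : ℝ) - x| ≤ y / 4), c n‖ ^ 2 := by
  refine ⟨π ^ 2, by positivity, fun N c y hy => ?_⟩
  set S : ℝ → ℂ := fun t => ∑ n ∈ Finset.Icc 1 N, c n * e (t * n)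
  set A : ℝ → ℂ := fun x =>
    ∑ n ∈ (Finset.Icc 1 N).filter (fun n : ℕ => |(n : ℝ) - x| ≤ y / 4), c n
  have hA : ∀ x, A x
      = ∑ n ∈ Finset.Icc 1 N, (Set.Icc ((n : ℝ) - y / 4) (n + y / 4)).indicator (fun _ => c n) x :=
    fun x => by simp only [A, Finset.sum_filter, Set.mem_Icc_iff_abs_le, Set.indicator_apply]
  have hS : ∀ t, ‖S t‖ ^ 2 ≤ (∑ n ∈ Finset.Icc 1 N, ‖c n‖) ^ 2 := fun t =>
    pow_le_pow_left₀ (norm_nonneg _)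
      (norm_sum_le_of_le _ fun n _ => by rw [norm_mul, norm_e, mul_one]) 2
  have hparseval : ∫ t, fejer (y / 4) t * ‖S t‖ ^ 2 = ∫ x, ‖A x‖ ^ 2 := by
    apply Complex.ofReal_injective
    rw [integral_mul_norm_sq_sum_e _ c (fun n : ℕ => (n : ℝ)) (integrable_fejer _)]
    simp_rw [hA]
    rw [integral_norm_sq_sum_indicator volume _ _ (fun _ => measurableSet_Icc)
      (fun _ => measure_Icc_lt_top.ne)]
    simp_rw [fourierInv_fejer (by positivity : 0 ≤ y / 4), volume_real_Icc_inter_Icc]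
  calc ∫ t in -(1/y)..(1/y), ‖S t‖ ^ 2
      ≤ (π / (4 * (y / 4))) ^ 2 * ∫ t, fejer (y / 4) t * ‖S t‖ ^ 2 :=
        intervalIntegral_le_mul_integral_fejer_mul (by positivity) (by positivity)
          (le_of_eq (by field_simp)) (by fun_prop) (fun t => by positivity) hS
    _ = π ^ 2 * y ^ (-2 : ℤ) * ∫ x, ‖A x‖ ^ 2 := by
        rw [hparseval, zpow_neg, zpow_ofNat]
        field_simp
end

section
/- Suppose q ≥ 1 and x > 0 are such that for every a with (a,q)=1 we have S(x,q,a) := ∑_{n ≤ x, n ≡ a (mod q)} Λ(n) ≥ x/φ(q). Then ∑_{n ≤ 4x, q | n} G(n) ≥ x²/(4φ(q)), where G(n) = ∑_{k₁+k₂=n} Λ(k₁)Λ(k₂). -/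
open ArithmeticFunction MeasureTheory Finset Real

/-! Split the pairs `(k₁, k₂)` with `k₁, k₂ ≤ x` and `q ∣ k₁ + k₂` according to the residue `a`
of `k₁`; the class pairs `(a, q - a)` with `(a, q) = 1` are disjoint and each contributes
`S(x,q,a) S(x,q,q-a) ≥ (x/φ(q))²`, so the sum is at least `φ(q) (x/φ(q))² = x²/φ(q)`. -/

lemma sum_vonMangoldt_mul_le_sum_G {P : Finset (ℕ × ℕ)} {S : Finset ℕ}
    (hP : ∀ p ∈ P, p.1 + p.2 ∈ S) :
    ∑ p ∈ P, Λ p.1 * Λ p.2 ≤ ∑ n ∈ S, G n := by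
  rw [← sum_fiberwise_of_maps_to hP]
  refine sum_le_sum fun n _ => sum_le_sum_of_subset_of_nonneg ?_ ?_
  · intro p hp
    exact mem_antidiagonal.2 (mem_filter.1 hp).2
  · exact fun _ _ _ => mul_nonneg vonMangoldt_nonneg vonMangoldt_nonneg

def residueClass (N q a : ℕ) : Finset ℕ := {n ∈ Icc 1 N | n % q = a % q}

lemma residueClass_disjoint {N q a a' : ℕ} (ha : a < q) (ha' : a' < q) (h : a ≠ a') :
    Disjoint (residueClass N q a) (residueClass N q a') := by
  refine disjoint_left.2 fun n hn hn' => h ?_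
  rw [residueClass, mem_filter] at hn hn'
  rw [← Nat.mod_eq_of_lt ha, ← Nat.mod_eq_of_lt ha', ← hn.2, hn'.2]

lemma dvd_add_of_mem_residueClass {N q a n m : ℕ} (ha : a ≤ q)
    (hn : n ∈ residueClass N q a) (hm : m ∈ residueClass N q (q - a)) : q ∣ n + m := by
  rw [residueClass, mem_filter] at hn hm
  have hsum : n + m ≡ a + (q - a) [MOD q] := Nat.ModEq.add hn.2 hm.2
  rw [Nat.add_sub_cancel' ha] at hsum
  exact (Nat.modEq_zero_iff_dvd).1 (hsum.trans (Nat.mod_self q))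

lemma sum_residueClass_mul_le_sum_G {N M q : ℕ} {A : Finset ℕ} (hA : ∀ a ∈ A, a < q)
    (hNM : 2 * N ≤ M) :
    ∑ a ∈ A, (∑ n ∈ residueClass N q a, Λ n) * (∑ n ∈ residueClass N q (q - a), Λ n) ≤
      ∑ n ∈ Icc 1 M with q ∣ n, G n := by
  have hdisj : (A : Set ℕ).PairwiseDisjoint
      fun a => residueClass N q a ×ˢ residueClass N q (q - a) :=
    fun a ha a' ha' h => disjoint_product.2 (Or.inl (residueClass_disjoint (hA a ha) (hA a' ha') h))
  simp_rw [sum_mul_sum, ← sum_product']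
  rw [← sum_biUnion hdisj]
  refine sum_vonMangoldt_mul_le_sum_G fun p hp => ?_
  obtain ⟨a, ha, hp⟩ := mem_biUnion.1 hp
  obtain ⟨hp₁, hp₂⟩ := mem_product.1 hp
  have h₁ := (mem_Icc.1 (mem_filter.1 hp₁).1)
  have h₂ := (mem_Icc.1 (mem_filter.1 hp₂).1)
  exact mem_filter.2 ⟨mem_Icc.2 ⟨by omega, by omega⟩,
    dvd_add_of_mem_residueClass (hA a ha).le hp₁ hp₂⟩

lemma sq_div_four_mul_le_mul_sq_div {c : ℝ} (hc : 0 < c) (x : ℝ) :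
    x ^ 2 / (4 * c) ≤ c * (x / c) ^ 2 := by
  rw [div_pow, mul_div_assoc', sq c, mul_div_mul_left _ _ hc.ne']
  exact div_le_div_of_nonneg_left (sq_nonneg x) hc (by linarith)

theorem stmt16 (q : ℕ) (hq : 1 ≤ q) (x : ℝ) (hx : 0 < x)
    (hS : ∀ a : ℕ, Nat.Coprime a q →
      (∑ n ∈ (Finset.Icc 1 ⌊x⌋₊).filter (fun n => n % q = a % q), Λ n) ≥
        x / Nat.totient q) :
    (∑ n ∈ (Finset.Icc 1 ⌊4 * x⌋₊).filter (fun n => q ∣ n), G n) ≥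
      x ^ 2 / (4 * Nat.totient q) := by
  set A := {a ∈ range q | q.Coprime a}
  have hA : ∀ a ∈ A, a < q ∧ a.Coprime q := fun a ha =>
    ⟨mem_range.1 (mem_filter.1 ha).1, (mem_filter.1 ha).2.symm⟩
  have hφ : (0 : ℝ) < q.totient := by exact_mod_cast Nat.totient_pos.2 hq
  have h2N : 2 * ⌊x⌋₊ ≤ ⌊4 * x⌋₊ := Nat.le_floor <| by
    push_cast; linarith [Nat.floor_le hx.le]
  have hclass : ∀ a ∈ A, x / q.totient * (x / q.totient) ≤
      (∑ n ∈ residueClass ⌊x⌋₊ q a, Λ n) * ∑ n ∈ residueClass ⌊x⌋₊ q (q - a), Λ n :=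
    fun a ha => mul_le_mul (hS a (hA a ha).2)
      (hS _ ((Nat.coprime_self_sub_left (hA a ha).1.le).2 (hA a ha).2))
      (by positivity) (sum_nonneg fun _ _ => vonMangoldt_nonneg)
  calc x ^ 2 / (4 * q.totient) ≤ q.totient * (x / q.totient) ^ 2 :=
        sq_div_four_mul_le_mul_sq_div hφ x
    _ = ∑ a ∈ A, x / q.totient * (x / q.totient) := by
        rw [sum_const, nsmul_eq_mul, ← Nat.totient_eq_card_coprime, sq]
    _ ≤ _ := (sum_le_sum hclass).trans
        (sum_residueClass_mul_le_sum_G (fun a ha => (hA a ha).1) h2N)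
end
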